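/- For every a ∈ Z_{p²} and every k with 0 ≤ k ≤ pf−1, the value S(β^a) = Σ_{i=0}^{p²−1} s_i·β^{a·i} is given by: S(β^a) = 1 if a = 0; S(β^a) = 1 + H_{(b+k) mod f}^{(p)}(β) if a ∈ p·D_k^{(p)}; and S(β^a) = 1 + H_{(b+k) mod f}^{(p)}(β) + H_{(b+k) mod pf}^{(p²)}(β) if a ∈ D_k^{(p²)}. -/

import Mathlib

open Finset Polynomial

/-- Generalized cyclotomic class `D_i^{(p)} = {g^(f·t+i) mod p : 0 ≤ t < e}`. -/
def Dp (p e f g i : ℕ) : Finset ℕ :=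
  (Finset.range e).image fun t => g ^ (f * t + i) % p

/-- Generalized cyclotomic class `D_i^{(p²)} = {g^(p·f·t+i) mod p² : 0 ≤ t < e}`. -/
def Dp2 (p e f g i : ℕ) : Finset ℕ :=
  (Finset.range e).image fun t => g ^ (p * f * t + i) % p ^ 2

/-- `p·D_i^{(p)} = {p·x mod p² : x ∈ D_i^{(p)}} ⊆ Z_{p²}`. -/
def pDp (p e f g i : ℕ) : Finset ℕ :=
  (Dp p e f g i).image fun x => p * x % p ^ 2

/-- `H_b^{(p)} = ⋃_{i=0}^{f/2-1} p·D_{(i+b) mod f}^{(p)}`. -/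
def Hp (p e f g b : ℕ) : Finset ℕ :=
  (Finset.range (f / 2)).biUnion fun i => pDp p e f g ((i + b) % f)

/-- `H_b^{(p²)} = ⋃_{i=0}^{pf/2-1} D_{(i+b) mod pf}^{(p²)}`. -/
def Hp2 (p e f g b : ℕ) : Finset ℕ :=
  (Finset.range (p * f / 2)).biUnion fun i => Dp2 p e f g ((i + b) % (p * f))

/-- The characteristic set `C₁ = H_b^{(p)} ∪ H_b^{(p²)} ∪ {0}`. -/
def C1 (p e f g b : ℕ) : Finset ℕ :=
  Hp p e f g b ∪ Hp2 p e f g b ∪ {0}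

/-- The value `S(x) = Σ_{i=0}^{p²-1} s_i x^i` in `K`, where `s_i = 1` iff `i mod p² ∈ C₁`. -/
def Sval (p e f g b : ℕ) {K : Type*} [Field K] (x : K) : K :=
  ∑ i ∈ Finset.range (p ^ 2), if i % p ^ 2 ∈ C1 p e f g b then x ^ i else 0

/-!
Multiplication by `a ∈ D_k^{(p²)}` permutes the cyclotomic classes, sending `D_j^{(p²)}` to
`D_{j+k}^{(p²)}` and `p·D_j^{(p)}` to `p·D_{j+k}^{(p)}`, so `S(β^a)` is `1` plus the two `H`-sums
shifted by `k`. Multiplication by `a ∈ p·D_k^{(p)}` kills `p·ℤ_{p²}`, so each of the `(p-1)/2`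
elements of `H_b^{(p)}` contributes `1`, and it sends `D_j^{(p²)}` onto `p·D_{j+k}^{(p)}`. The
`pf/2` classes of `H_b^{(p²)}` then run through the `f/2` classes of `H_{b+k}^{(p)}` followed by
`(p-1)/2` complete systems `p·ℤ_p^*`, each summing to `-1` because `β^p` is a primitive `p`-th root
of unity; these cancel the `(p-1)/2` ones. At `a = 0`, `|C₁| = 1 + (p²-1)/2` is odd, so `S(1) = 1`
in characteristic `2`.
-/

theorem Nat.exists_lt_mul_add_modEq {m i d e : ℕ} (hpos : 0 < e * d) (h : m ≡ i [MOD d]) :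
    ∃ t < e, d * t + i ≡ m [MOD e * d] := by
  have hle : i ≤ m + e * d * i := (Nat.le_mul_of_pos_left i hpos).trans (Nat.le_add_left _ m)
  have hcongr : i ≡ m + e * d * i [MOD d] := by
    refine h.symm.trans ?_
    simp [Nat.ModEq, mul_comm e d, mul_assoc, Nat.add_mul_mod_self_left]
  obtain ⟨q, hq⟩ := (Nat.modEq_iff_dvd' hle).mp hcongr
  refine ⟨q % e, Nat.mod_lt _ (Nat.pos_of_mul_pos_right hpos), ?_⟩
  calc d * (q % e) + i ≡ d * q + i [MOD e * d] := by
        rw [mul_comm e d]; exact (Nat.ModEq.mul_left' d (Nat.mod_modEq q e)).add_right i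
    _ = m + e * d * i := by omega
    _ ≡ m [MOD e * d] := Nat.add_mul_mod_self_left m (e * d) i

theorem Nat.pos_and_pos_of_mul_pos {e p f : ℕ} (h : 0 < e * (p * f)) : 0 < p ∧ 0 < e * f :=
  ⟨Nat.pos_of_mul_pos_right (Nat.pos_of_mul_pos_left h),
    Nat.pos_of_mul_pos_left (mul_left_comm e p f ▸ h)⟩

theorem Nat.mul_div_two_eq_add {p e f : ℕ} (hp : 0 < p) (hef : p - 1 = e * f) (hf : 2 ∣ f) :
    p * f / 2 = f / 2 + f / 2 * e * f := by
  obtain ⟨h, rfl⟩ := hf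
  rw [show p = e * (2 * h) + 1 by omega,
    show (e * (2 * h) + 1) * (2 * h) = 2 * ((e * (2 * h) + 1) * h) by ring,
    Nat.mul_div_cancel_left _ two_pos, Nat.mul_div_cancel_left _ two_pos]
  ring

theorem sum_range_mul_eq_nsmul {M : Type*} [AddCommMonoid M] {h : ℕ → M} {f : ℕ} {s : M}
    (hs : ∀ c, ∑ i ∈ range f, h (c + i) = s) (q c : ℕ) :
    ∑ i ∈ range (q * f), h (c + i) = q • s := by
  induction q with
  | zero => simp
  | succ q ih =>
    rw [add_mul, one_mul, sum_range_add, ih, ← hs (c + q * f), succ_nsmul]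
    simp only [add_assoc]

theorem IsPrimitiveRoot.sum_Ico_one_eq_neg_one {K : Type*} [CommRing K] [IsDomain K] {ζ : K}
    {k : ℕ} (h : IsPrimitiveRoot ζ k) (hk : 1 < k) : ∑ i ∈ Ico 1 k, ζ ^ i = -1 := by
  have := h.geom_sum_eq_zero hk
  rw [sum_range_eq_add_Ico _ (by omega), pow_zero] at this
  linear_combination this

theorem Nat.pow_mod_eq_pow_mod_iff {n g m m' : ℕ} (hg : 0 < orderOf (g : ZMod n)) :
    g ^ m % n = g ^ m' % n ↔ m ≡ m' [MOD orderOf (g : ZMod n)] := by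
  rw [← Nat.ModEq, ← ZMod.natCast_eq_natCast_iff, Nat.cast_pow, Nat.cast_pow]
  exact (orderOf_pos_iff.mp hg).pow_eq_pow_iff_modEq

theorem Nat.coprime_of_orderOf_natCast_pos {n g : ℕ} (hg : 0 < orderOf (g : ZMod n)) :
    g.Coprime n :=
  (ZMod.isUnit_iff_coprime g n).mp (orderOf_pos_iff.mp hg).isUnit

theorem pow_eq_pow_of_natCast_eq {M : Type*} [Monoid M] {β : M} {n x y : ℕ}
    (hβ : orderOf β = n) (h : (x : ZMod n) = y) : β ^ x = β ^ y := by
  rw [← pow_mod_orderOf, ← pow_mod_orderOf β y, hβ, (ZMod.natCast_eq_natCast_iff' x y n).mp h]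

theorem ZMod.natCast_self_mul_natCast_mod (p w : ℕ) :
    (p : ZMod (p ^ 2)) * ((w % p : ℕ) : ZMod (p ^ 2)) = p * w := by
  have hsq : (p : ZMod (p ^ 2)) ^ 2 = 0 := by exact_mod_cast ZMod.natCast_self (p ^ 2)
  conv_rhs => rw [← Nat.mod_add_div w p]
  push_cast
  linear_combination (-((w / p : ℕ) : ZMod (p ^ 2))) * hsq

theorem ZMod.natCast_self_mul_pow_eq_of_modEq {p g u v : ℕ} (hg : 0 < orderOf (g : ZMod p))
    (h : u ≡ v [MOD orderOf (g : ZMod p)]) :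
    (p : ZMod (p ^ 2)) * (g : ZMod (p ^ 2)) ^ u = p * (g : ZMod (p ^ 2)) ^ v := by
  have hmod := (Nat.pow_mod_eq_pow_mod_iff hg).mpr h
  rw [← Nat.cast_pow, ← Nat.cast_pow, ← ZMod.natCast_self_mul_natCast_mod, hmod,
    ZMod.natCast_self_mul_natCast_mod]

theorem orderOf_natCast_zmod_eq_sub_one {p g : ℕ} (hp : p.Prime)
    (hg : orderOf (g : ZMod (p ^ 2)) = p * (p - 1)) : orderOf (g : ZMod p) = p - 1 := by
  have := Fact.mk hp
  have hpos : 0 < orderOf (g : ZMod (p ^ 2)) := by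
    rw [hg]; exact Nat.mul_pos hp.pos (Nat.sub_pos_of_lt hp.one_lt)
  have hcop : g.Coprime p :=
    (Nat.coprime_of_orderOf_natCast_pos hpos).coprime_dvd_right (dvd_pow_self p two_ne_zero)
  have hg0 : (g : ZMod p) ≠ 0 := by
    rw [Ne, ZMod.natCast_eq_zero_iff]; exact (Nat.Prime.coprime_iff_not_dvd hp).mp hcop.symm
  refine Nat.dvd_antisymm (orderOf_dvd_of_pow_eq_one (ZMod.pow_card_sub_one_eq_one hg0)) ?_
  set d := orderOf (g : ZMod p)
  have hp_dvd : (p : ℤ) ∣ (g : ℤ) ^ d - 1 := by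
    rw [← ZMod.intCast_zmod_eq_zero_iff_dvd]; push_cast; rw [pow_orderOf_eq_one, sub_self]
  have hsq_dvd : ((p ^ 2 : ℕ) : ℤ) ∣ (g : ℤ) ^ (d * p) - 1 := by
    simpa [pow_mul] using dvd_sub_pow_of_dvd_sub hp_dvd 1
  have hpow : (g : ZMod (p ^ 2)) ^ (d * p) = 1 := by
    rw [← sub_eq_zero]; exact_mod_cast (ZMod.intCast_zmod_eq_zero_iff_dvd _ _).mpr hsq_dvd
  have := orderOf_dvd_of_pow_eq_one hpow
  rw [hg, mul_comm d p] at this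
  exact Nat.dvd_of_mul_dvd_mul_left hp.pos this

section CyclotomicClass

variable {n e d g : ℕ}

theorem mem_Dp (hg : orderOf (g : ZMod n) = e * d) (hpos : 0 < e * d) {i x : ℕ} :
    x ∈ Dp n e d g i ↔ ∃ m, m ≡ i [MOD d] ∧ g ^ m % n = x := by
  simp only [Dp, mem_image, mem_range]
  constructor
  · rintro ⟨t, -, rfl⟩
    exact ⟨d * t + i, by simp [Nat.ModEq], rfl⟩
  · rintro ⟨m, hm, rfl⟩
    obtain ⟨t, ht, hmt⟩ := Nat.exists_lt_mul_add_modEq hpos hm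
    exact ⟨t, ht, (Nat.pow_mod_eq_pow_mod_iff (hg ▸ hpos)).mpr (hg ▸ hmt)⟩

theorem Dp_congr (hg : orderOf (g : ZMod n) = e * d) (hpos : 0 < e * d) {i j : ℕ}
    (h : i ≡ j [MOD d]) : Dp n e d g i = Dp n e d g j := by
  ext x
  simp only [mem_Dp hg hpos]
  exact exists_congr fun m => and_congr_left' ⟨fun hm => hm.trans h, fun hm => hm.trans h.symm⟩

theorem disjoint_Dp (hg : orderOf (g : ZMod n) = e * d) (hpos : 0 < e * d) {i j : ℕ}
    (h : ¬ i ≡ j [MOD d]) : Disjoint (Dp n e d g i) (Dp n e d g j) := by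
  refine disjoint_left.mpr fun x hi hj => h ?_
  obtain ⟨m, hmi, rfl⟩ := (mem_Dp hg hpos).mp hi
  obtain ⟨m', hmj, hmm'⟩ := (mem_Dp hg hpos).mp hj
  have := (Nat.pow_mod_eq_pow_mod_iff (hg ▸ hpos)).mp hmm'.symm
  rw [hg] at this
  exact hmi.symm.trans ((Nat.ModEq.of_mul_left e this).trans hmj)

theorem pairwiseDisjoint_Dp_add (hg : orderOf (g : ZMod n) = e * d) (hpos : 0 < e * d)
    (c : ℕ) {s : ℕ} (hs : s ≤ d) :
    (range s : Set ℕ).PairwiseDisjoint fun i => Dp n e d g (c + i) := by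
  intro i hi j hj hij
  refine disjoint_Dp hg hpos fun h => hij ?_
  rw [coe_range, Set.mem_Iio] at hi hj
  exact (h.add_left_cancel' c).eq_of_lt_of_lt (by omega) (by omega)

theorem sum_Dp {M : Type*} [AddCommMonoid M] (hg : orderOf (g : ZMod n) = e * d)
    (hpos : 0 < e * d) (i : ℕ) (F : ℕ → M) :
    ∑ x ∈ Dp n e d g i, F x = ∑ t ∈ range e, F (g ^ (d * t + i) % n) := by
  refine sum_image fun t ht t' ht' htt' => ?_
  have := (Nat.pow_mod_eq_pow_mod_iff (hg ▸ hpos)).mp htt'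
  rw [hg, mul_comm] at this
  have := Nat.ModEq.mul_left_cancel' (Nat.pos_of_mul_pos_left hpos).ne' (this.add_right_cancel' i)
  exact Nat.ModEq.eq_of_lt_of_lt this (mem_range.mp ht) (mem_range.mp ht')

theorem card_Dp (hg : orderOf (g : ZMod n) = e * d) (hpos : 0 < e * d) (i : ℕ) :
    #(Dp n e d g i) = e := by
  rw [card_eq_sum_ones, sum_Dp hg hpos, sum_const, card_range, smul_eq_mul, mul_one]

theorem coprime_of_mem_Dp {i x : ℕ} (hg : g.Coprime n) (hx : x ∈ Dp n e d g i) :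
    x.Coprime n := by
  obtain ⟨t, -, rfl⟩ := mem_image.mp hx
  exact (ZMod.coprime_mod_iff_coprime _ n).mpr (hg.pow_left _)

theorem Dp_subset_Ico {i : ℕ} (hn : 1 < n) (hg : g.Coprime n) :
    Dp n e d g i ⊆ Ico 1 n := by
  intro x hx
  obtain ⟨t, -, rfl⟩ := mem_image.mp hx
  refine mem_Ico.mpr ⟨Nat.pos_of_ne_zero fun h0 => ?_, Nat.mod_lt _ (by omega)⟩
  have := Nat.Coprime.eq_one_of_dvd (hg.pow_left (d * t + i)).symm
    (Nat.dvd_of_mod_eq_zero h0)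
  omega

end CyclotomicClass

section Classes

variable {p e f g : ℕ}

theorem Dp2_eq_Dp (i : ℕ) : Dp2 p e f g i = Dp (p ^ 2) e (p * f) g i := rfl

theorem pDp_eq_image (hp : 0 < p) (i : ℕ) : pDp p e f g i = (Dp p e f g i).image (p * ·) := by
  refine image_congr fun x hx => Nat.mod_eq_of_lt ?_
  obtain ⟨t, -, rfl⟩ := mem_image.mp hx
  rw [sq]
  exact Nat.mul_lt_mul_of_pos_left (Nat.mod_lt _ hp) hp

theorem Hp_eq_image (hp : 0 < p) (hg : orderOf (g : ZMod p) = e * f) (hpos : 0 < e * f)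
    (c : ℕ) :
    Hp p e f g c = ((range (f / 2)).biUnion fun i => Dp p e f g (c + i)).image (p * ·) := by
  rw [biUnion_image]
  refine biUnion_congr rfl fun i _ => ?_
  have h : (i + c) % f ≡ c + i [MOD f] := by rw [add_comm c i]; exact Nat.mod_modEq _ _
  rw [pDp_eq_image hp, Dp_congr hg hpos h]

theorem Hp2_eq_biUnion (hg : orderOf (g : ZMod (p ^ 2)) = e * (p * f)) (hpos : 0 < e * (p * f))
    (c : ℕ) : Hp2 p e f g c = (range (p * f / 2)).biUnion fun i => Dp2 p e f g (c + i) :=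
  biUnion_congr rfl fun i _ => by
    have h : (i + c) % (p * f) ≡ c + i [MOD p * f] := by
      rw [add_comm c i]; exact Nat.mod_modEq _ _
    rw [Dp2_eq_Dp, Dp2_eq_Dp, Dp_congr hg hpos h]

theorem Hp_congr (hp : 0 < p) (hg : orderOf (g : ZMod p) = e * f) (hpos : 0 < e * f) {c c' : ℕ}
    (h : c ≡ c' [MOD f]) : Hp p e f g c = Hp p e f g c' := by
  simp only [Hp_eq_image hp hg hpos, Dp_congr hg hpos (h.add_right _)]

theorem Hp2_congr (hg : orderOf (g : ZMod (p ^ 2)) = e * (p * f)) (hpos : 0 < e * (p * f))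
    {c c' : ℕ} (h : c ≡ c' [MOD p * f]) : Hp2 p e f g c = Hp2 p e f g c' := by
  simp only [Hp2_eq_biUnion hg hpos, Dp2_eq_Dp, Dp_congr hg hpos (h.add_right _)]

theorem sum_Hp {M : Type*} [AddCommMonoid M] (hp : 0 < p) (hg : orderOf (g : ZMod p) = e * f)
    (hpos : 0 < e * f) (c : ℕ) (F : ℕ → M) :
    ∑ x ∈ Hp p e f g c, F x =
      ∑ i ∈ range (f / 2), ∑ y ∈ Dp p e f g (c + i), F (p * y) := by
  rw [Hp_eq_image hp hg hpos, sum_image fun x _ y _ h => Nat.eq_of_mul_eq_mul_left hp h,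
    sum_biUnion (pairwiseDisjoint_Dp_add hg hpos c (Nat.div_le_self f 2))]

theorem sum_Hp2 {M : Type*} [AddCommMonoid M] (hg : orderOf (g : ZMod (p ^ 2)) = e * (p * f))
    (hpos : 0 < e * (p * f)) (c : ℕ) (F : ℕ → M) :
    ∑ x ∈ Hp2 p e f g c, F x =
      ∑ i ∈ range (p * f / 2), ∑ x ∈ Dp2 p e f g (c + i), F x := by
  rw [Hp2_eq_biUnion hg hpos]
  exact sum_biUnion (pairwiseDisjoint_Dp_add hg hpos c (Nat.div_le_self (p * f) 2))

theorem card_Hp (hp : 0 < p) (hg : orderOf (g : ZMod p) = e * f) (hpos : 0 < e * f) (c : ℕ) :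
    #(Hp p e f g c) = f / 2 * e := by
  rw [card_eq_sum_ones, sum_Hp hp hg hpos]
  simp only [sum_const, card_Dp hg hpos, card_range, smul_eq_mul, mul_one]

theorem card_Hp2 (hg : orderOf (g : ZMod (p ^ 2)) = e * (p * f)) (hpos : 0 < e * (p * f))
    (c : ℕ) : #(Hp2 p e f g c) = p * f / 2 * e := by
  rw [card_eq_sum_ones, sum_Hp2 hg hpos]
  simp only [sum_const, Dp2_eq_Dp, card_Dp hg hpos, card_range, smul_eq_mul, mul_one]

theorem biUnion_Dp_eq_Ico (hp : 1 < p) (hef : p - 1 = e * f)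
    (hg : orderOf (g : ZMod p) = e * f) (c : ℕ) :
    (range f).biUnion (fun j => Dp p e f g (c + j)) = Ico 1 p := by
  have hpos : 0 < e * f := by omega
  refine eq_of_subset_of_card_le (biUnion_subset.mpr fun j _ =>
    Dp_subset_Ico hp (Nat.coprime_of_orderOf_natCast_pos (hg ▸ hpos))) ?_
  rw [card_biUnion (pairwiseDisjoint_Dp_add hg hpos c le_rfl), Nat.card_Ico, hef]
  simp only [card_Dp hg hpos, sum_const, card_range, smul_eq_mul, mul_comm, le_refl]

theorem exists_mem_Ico_of_mem_Hp (hp : 1 < p) (hg : orderOf (g : ZMod p) = e * f)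
    (hpos : 0 < e * f) {c x : ℕ} (hx : x ∈ Hp p e f g c) : ∃ y ∈ Ico 1 p, p * y = x := by
  rw [Hp_eq_image (by omega) hg hpos] at hx
  obtain ⟨y, hy, rfl⟩ := mem_image.mp hx
  obtain ⟨i, -, hy⟩ := mem_biUnion.mp hy
  exact ⟨y, Dp_subset_Ico hp (Nat.coprime_of_orderOf_natCast_pos (hg ▸ hpos)) hy, rfl⟩

theorem not_dvd_of_mem_Hp2 (hp : 1 < p) (hg : orderOf (g : ZMod (p ^ 2)) = e * (p * f))
    (hpos : 0 < e * (p * f)) {c x : ℕ} (hx : x ∈ Hp2 p e f g c) : ¬ p ∣ x ∧ x < p ^ 2 := by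
  rw [Hp2_eq_biUnion hg hpos] at hx
  obtain ⟨i, -, hx⟩ := mem_biUnion.mp hx
  have hcop := Nat.coprime_of_orderOf_natCast_pos (hg ▸ hpos)
  refine ⟨fun hdvd => ?_,
    (mem_Ico.mp (Dp_subset_Ico (Nat.one_lt_pow two_ne_zero hp) hcop hx)).2⟩
  have := Nat.Coprime.eq_one_of_dvd ((coprime_of_mem_Dp hcop hx).coprime_dvd_left hdvd)
    (dvd_pow_self p two_ne_zero)
  omega

end Classes

section Sums

variable {p e f g : ℕ} {K : Type*} [Field K] {β : K}

theorem sum_range_sum_Dp_pow_mul_eq_neg_one (hp : 1 < p) (hef : p - 1 = e * f)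
    (hg : orderOf (g : ZMod p) = e * f) (hβ : orderOf β = p ^ 2) (c : ℕ) :
    ∑ j ∈ range f, ∑ y ∈ Dp p e f g (c + j), β ^ (p * y) = -1 := by
  have hpos : 0 < e * f := by omega
  have hγ : IsPrimitiveRoot (β ^ p) p := by
    have := (IsPrimitiveRoot.orderOf β).pow_of_dvd (by omega) (hβ ▸ dvd_pow_self p two_ne_zero)
    rwa [hβ, sq, Nat.mul_div_cancel _ (by omega)] at this
  rw [← sum_biUnion (pairwiseDisjoint_Dp_add hg hpos c le_rfl),
    biUnion_Dp_eq_Ico hp hef hg]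
  simp only [pow_mul]
  exact hγ.sum_Ico_one_eq_neg_one hp

theorem sum_Dp2_pow_mul_of_mem_Dp2 (hg : orderOf (g : ZMod (p ^ 2)) = e * (p * f))
    (hpos : 0 < e * (p * f)) (hβ : orderOf β = p ^ 2) {a k : ℕ} (ha : a ∈ Dp2 p e f g k)
    (j : ℕ) : ∑ x ∈ Dp2 p e f g j, β ^ (a * x) = ∑ x ∈ Dp2 p e f g (k + j), β ^ x := by
  obtain ⟨m, hm, rfl⟩ := (mem_Dp hg hpos).mp ha
  rw [Dp2_eq_Dp, Dp2_eq_Dp, ← Dp_congr hg hpos (hm.add_right j), sum_Dp hg hpos,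
    sum_Dp hg hpos]
  refine sum_congr rfl fun t _ => pow_eq_pow_of_natCast_eq hβ ?_
  simp only [Nat.cast_mul, Nat.cast_pow, ZMod.natCast_mod]
  ring

theorem sum_Dp_pow_mul_of_mem_Dp2 (hg1 : orderOf (g : ZMod p) = e * f)
    (hg2 : orderOf (g : ZMod (p ^ 2)) = e * (p * f)) (hpos : 0 < e * (p * f))
    (hβ : orderOf β = p ^ 2) {a k : ℕ} (ha : a ∈ Dp2 p e f g k) (j : ℕ) :
    ∑ y ∈ Dp p e f g j, β ^ (a * (p * y)) = ∑ y ∈ Dp p e f g (k + j), β ^ (p * y) := by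
  obtain ⟨-, hpos1⟩ := Nat.pos_and_pos_of_mul_pos hpos
  obtain ⟨m, hm, rfl⟩ := (mem_Dp hg2 hpos).mp ha
  rw [← Dp_congr hg1 hpos1 ((hm.of_mul_left p).add_right j), sum_Dp hg1 hpos1,
    sum_Dp hg1 hpos1]
  refine sum_congr rfl fun t _ => pow_eq_pow_of_natCast_eq hβ ?_
  simp only [Nat.cast_mul, ZMod.natCast_mod, mul_left_comm _ (p : ZMod (p ^ 2)),
    ZMod.natCast_self_mul_natCast_mod, Nat.cast_pow]
  ring

theorem sum_Dp2_pow_mul_of_mem_pDp (hef : p - 1 = e * f) (hg1 : orderOf (g : ZMod p) = e * f)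
    (hg2 : orderOf (g : ZMod (p ^ 2)) = e * (p * f)) (hpos : 0 < e * (p * f))
    (hβ : orderOf β = p ^ 2) {a k : ℕ} (ha : a ∈ pDp p e f g k) (j : ℕ) :
    ∑ x ∈ Dp2 p e f g j, β ^ (a * x) = ∑ y ∈ Dp p e f g (k + j), β ^ (p * y) := by
  obtain ⟨hp, hpos1⟩ := Nat.pos_and_pos_of_mul_pos hpos
  rw [pDp_eq_image hp] at ha
  obtain ⟨y, hy, rfl⟩ := mem_image.mp ha
  obtain ⟨m, hm, rfl⟩ := (mem_Dp hg1 hpos1).mp hy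
  rw [← Dp_congr hg1 hpos1 (hm.add_right j), Dp2_eq_Dp, sum_Dp hg2 hpos, sum_Dp hg1 hpos1]
  refine sum_congr rfl fun t _ => pow_eq_pow_of_natCast_eq hβ ?_
  have hexp : m + (p * f * t + j) ≡ f * t + (m + j) [MOD orderOf (g : ZMod p)] := by
    have hp1 : p = e * f + 1 := by omega
    rw [hg1, show m + (p * f * t + j) = f * t + (m + j) + e * f * (f * t) by rw [hp1]; ring]
    exact Nat.add_mul_mod_self_left _ _ _
  have key := ZMod.natCast_self_mul_pow_eq_of_modEq (hg1 ▸ hpos1) hexp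
  simp only [Nat.cast_mul, ZMod.natCast_mod, ZMod.natCast_self_mul_natCast_mod, Nat.cast_pow]
  linear_combination key

theorem sum_Hp_pow_mul_of_mem_Dp2 (hg1 : orderOf (g : ZMod p) = e * f)
    (hg2 : orderOf (g : ZMod (p ^ 2)) = e * (p * f)) (hpos : 0 < e * (p * f))
    (hβ : orderOf β = p ^ 2) {a k : ℕ} (ha : a ∈ Dp2 p e f g k) (c : ℕ) :
    ∑ x ∈ Hp p e f g c, β ^ (a * x) = ∑ x ∈ Hp p e f g (c + k), β ^ x := by
  obtain ⟨hp, hpos1⟩ := Nat.pos_and_pos_of_mul_pos hpos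
  rw [sum_Hp hp hg1 hpos1, sum_Hp hp hg1 hpos1]
  refine sum_congr rfl fun i _ => ?_
  rw [sum_Dp_pow_mul_of_mem_Dp2 hg1 hg2 hpos hβ ha, show k + (c + i) = c + k + i by ring]

theorem sum_Hp2_pow_mul_of_mem_Dp2 (hg : orderOf (g : ZMod (p ^ 2)) = e * (p * f))
    (hpos : 0 < e * (p * f)) (hβ : orderOf β = p ^ 2) {a k : ℕ} (ha : a ∈ Dp2 p e f g k)
    (c : ℕ) : ∑ x ∈ Hp2 p e f g c, β ^ (a * x) = ∑ x ∈ Hp2 p e f g (c + k), β ^ x := by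
  rw [sum_Hp2 hg hpos, sum_Hp2 hg hpos]
  refine sum_congr rfl fun i _ => ?_
  rw [sum_Dp2_pow_mul_of_mem_Dp2 hg hpos hβ ha, show k + (c + i) = c + k + i by ring]

theorem sum_Hp_pow_mul_of_mem_pDp (hp : 0 < p) (hg : orderOf (g : ZMod p) = e * f)
    (hpos : 0 < e * f) (hβ : orderOf β = p ^ 2) {a k : ℕ} (ha : a ∈ pDp p e f g k) (c : ℕ) :
    ∑ x ∈ Hp p e f g c, β ^ (a * x) = (f / 2 * e : ℕ) := by
  obtain ⟨y, -, rfl⟩ := mem_image.mp (pDp_eq_image hp k ▸ ha)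
  have hone : ∀ z, β ^ (p * y * (p * z)) = 1 := fun z => by
    rw [show p * y * (p * z) = p ^ 2 * (y * z) by ring, pow_mul, ← hβ, pow_orderOf_eq_one,
      one_pow]
  simp [sum_Hp hp hg hpos, hone, card_Dp hg hpos]

theorem sum_Hp2_pow_mul_of_mem_pDp (hp : 1 < p) (hef : p - 1 = e * f) (hf : 2 ∣ f)
    (hg1 : orderOf (g : ZMod p) = e * f) (hg2 : orderOf (g : ZMod (p ^ 2)) = e * (p * f))
    (hβ : orderOf β = p ^ 2) {a k : ℕ} (ha : a ∈ pDp p e f g k) (c : ℕ) :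
    ∑ x ∈ Hp2 p e f g c, β ^ (a * x) =
      ∑ x ∈ Hp p e f g (c + k), β ^ x - (f / 2 * e : ℕ) := by
  have hpos1 : 0 < e * f := by omega
  have hpos2 : 0 < e * (p * f) := by rw [mul_left_comm]; exact Nat.mul_pos (by omega) hpos1
  calc ∑ x ∈ Hp2 p e f g c, β ^ (a * x)
      = ∑ i ∈ range (p * f / 2), ∑ y ∈ Dp p e f g (c + k + i), β ^ (p * y) := by
        rw [sum_Hp2 hg2 hpos2]
        refine sum_congr rfl fun i _ => ?_
        rw [sum_Dp2_pow_mul_of_mem_pDp hef hg1 hg2 hpos2 hβ ha,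
          show k + (c + i) = c + k + i by ring]
    _ = ∑ i ∈ range (f / 2), ∑ y ∈ Dp p e f g (c + k + i), β ^ (p * y)
          + (f / 2 * e) • (-1) := by
        rw [Nat.mul_div_two_eq_add (by omega) hef hf, sum_range_add,
          ← sum_range_mul_eq_nsmul (h := fun n => ∑ y ∈ Dp p e f g n, β ^ (p * y))
            (sum_range_sum_Dp_pow_mul_eq_neg_one hp hef hg1 hβ) _ (c + k + f / 2)]
        simp only [add_assoc]
    _ = _ := by
        rw [sum_Hp (by omega) hg1 hpos1]
        simp [sub_eq_add_neg]

theorem Sval_pow_eq (hp : 1 < p) (hg1 : orderOf (g : ZMod p) = e * f) (hpos1 : 0 < e * f)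
    (hg2 : orderOf (g : ZMod (p ^ 2)) = e * (p * f)) (hpos2 : 0 < e * (p * f)) (b a : ℕ) :
    Sval p e f g b (β ^ a) =
      1 + ∑ x ∈ Hp p e f g b, β ^ (a * x) + ∑ x ∈ Hp2 p e f g b, β ^ (a * x) := by
  have hdisj : Disjoint (Hp p e f g b) (Hp2 p e f g b) := by
    refine disjoint_left.mpr fun x hx hx2 => ?_
    obtain ⟨y, -, rfl⟩ := exists_mem_Ico_of_mem_Hp hp hg1 hpos1 hx
    exact (not_dvd_of_mem_Hp2 hp hg2 hpos2 hx2).1 (dvd_mul_right p y)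
  have hzero : 0 ∉ Hp p e f g b ∪ Hp2 p e f g b := by
    rintro h
    rcases mem_union.mp h with h | h
    · obtain ⟨y, hy, hy0⟩ := exists_mem_Ico_of_mem_Hp hp hg1 hpos1 h
      have := (mem_Ico.mp hy).1
      simp only [mul_eq_zero] at hy0
      omega
    · exact (not_dvd_of_mem_Hp2 hp hg2 hpos2 h).1 (dvd_zero p)
  have hsub : C1 p e f g b ⊆ range (p ^ 2) := by
    intro x hx
    simp only [C1, mem_union, mem_singleton] at hx
    rw [mem_range]
    rcases hx with (hx | hx) | rfl
    · obtain ⟨y, hy, rfl⟩ := exists_mem_Ico_of_mem_Hp hp hg1 hpos1 hx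
      rw [sq]
      exact Nat.mul_lt_mul_of_pos_left (mem_Ico.mp hy).2 (by omega)
    · exact (not_dvd_of_mem_Hp2 hp hg2 hpos2 hx).2
    · positivity
  rw [Sval, sum_congr rfl fun i hi => by rw [Nat.mod_eq_of_lt (mem_range.mp hi), ← pow_mul],
    sum_ite_mem, inter_eq_right.mpr hsub, C1, sum_union (disjoint_singleton_right.mpr hzero),
    sum_union hdisj, sum_singleton, mul_zero, pow_zero]
  ring

theorem Sval_pow_zero [CharP K 2] (hp : 1 < p) (hef : p - 1 = e * f) (hf : 2 ∣ f)
    (hg1 : orderOf (g : ZMod p) = e * f) (hg2 : orderOf (g : ZMod (p ^ 2)) = e * (p * f))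
    (b : ℕ) : Sval p e f g b (β ^ 0) = 1 := by
  have hpos1 : 0 < e * f := by omega
  have hpos2 : 0 < e * (p * f) := by rw [mul_left_comm]; exact Nat.mul_pos (by omega) hpos1
  have heven : 2 ∣ f / 2 * e + p * f / 2 * e := by
    rw [Nat.mul_div_two_eq_add (by omega) hef hf,
      show f / 2 * e + (f / 2 + f / 2 * e * f) * e = 2 * (f / 2 * e) + f * (f / 2 * e * e) by ring]
    exact dvd_add (dvd_mul_right 2 _) (dvd_mul_of_dvd_left hf _)
  rw [Sval_pow_eq hp hg1 hpos1 hg2 hpos2]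
  simp only [zero_mul, pow_zero, sum_const, nsmul_one, card_Hp (by omega) hg1 hpos1,
    card_Hp2 hg2 hpos2]
  rw [add_assoc, ← Nat.cast_add, (CharP.cast_eq_zero_iff K 2 _).mpr heven, add_zero]

end Sums

theorem stmt_9_general (p e f r g : ℕ) (hp : p.Prime)
    (hr : 1 ≤ r) (hf : f = 2 ^ r) (hef : p - 1 = e * f)
    (hg : orderOf (g : ZMod (p ^ 2)) = p * (p - 1))
    {K : Type*} [Field K] (hK : CharP K 2) (β : K) (hβ : orderOf β = p ^ 2)
    (b : ℕ) :
    Sval p e f g b ((β : K) ^ (0 : ℕ)) = 1 ∧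
    ∀ k : ℕ, k < p * f →
      (∀ a ∈ pDp p e f g k,
        Sval p e f g b (β ^ a) = 1 + ∑ t ∈ Hp p e f g ((b + k) % f), β ^ t) ∧
      (∀ a ∈ Dp2 p e f g k,
        Sval p e f g b (β ^ a) =
          1 + (∑ t ∈ Hp p e f g ((b + k) % f), β ^ t) +
            ∑ t ∈ Hp2 p e f g ((b + k) % (p * f)), β ^ t) := by
  have hp1 : 1 < p := hp.one_lt
  have hf2 : 2 ∣ f := hf ▸ dvd_pow_self 2 (by omega)
  have hg1 : orderOf (g : ZMod p) = e * f := (orderOf_natCast_zmod_eq_sub_one hp hg).trans hef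
  have hg2 : orderOf (g : ZMod (p ^ 2)) = e * (p * f) := by rw [hg, hef]; ring
  have hpos1 : 0 < e * f := by omega
  have hpos2 : 0 < e * (p * f) := by rw [mul_left_comm]; exact Nat.mul_pos hp.pos hpos1
  refine ⟨?_, fun k _ => ⟨fun a ha => ?_, fun a ha => ?_⟩⟩
  · have := hK
    exact Sval_pow_zero hp1 hef hf2 hg1 hg2 b
  · rw [Sval_pow_eq hp1 hg1 hpos1 hg2 hpos2, Hp_congr hp.pos hg1 hpos1 (Nat.mod_modEq (b + k) f),
      sum_Hp_pow_mul_of_mem_pDp hp.pos hg1 hpos1 hβ ha,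
      sum_Hp2_pow_mul_of_mem_pDp hp1 hef hf2 hg1 hg2 hβ ha]
    ring
  · rw [Sval_pow_eq hp1 hg1 hpos1 hg2 hpos2, Hp_congr hp.pos hg1 hpos1 (Nat.mod_modEq (b + k) f),
      Hp2_congr hg2 hpos2 (Nat.mod_modEq (b + k) (p * f)),
      sum_Hp_pow_mul_of_mem_Dp2 hg1 hg2 hpos2 hβ ha, sum_Hp2_pow_mul_of_mem_Dp2 hg2 hpos2 hβ ha]

theorem stmt_9 (p e f r g : ℕ) (hp : p.Prime) (hodd : Odd p)
    (hr : 1 ≤ r) (hf : f = 2 ^ r) (hef : p - 1 = e * f)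
    (hg : orderOf (g : ZMod (p ^ 2)) = p * (p - 1))
    {K : Type*} [Field K] (hK : CharP K 2) (β : K) (hβ : orderOf β = p ^ 2)
    (b : ℕ) (hb : b < p * f) :
    Sval p e f g b ((β : K) ^ (0 : ℕ)) = 1 ∧
    ∀ k : ℕ, k < p * f →
      (∀ a ∈ pDp p e f g k,
        Sval p e f g b (β ^ a) = 1 + ∑ t ∈ Hp p e f g ((b + k) % f), β ^ t) ∧
      (∀ a ∈ Dp2 p e f g k,
        Sval p e f g b (β ^ a) =
          1 + (∑ t ∈ Hp p e f g ((b + k) % f), β ^ t) +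
            ∑ t ∈ Hp2 p e f g ((b + k) % (p * f)), β ^ t) :=
  stmt_9_general p e f r g hp hr hf hef hg hK β hβ b
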